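/- (Tournament form, nontransitive case / Master Theorem) Let T be a nontransitive tournament on n vertices and a₁,…,aₙ positive integers. Then the constant term of ∏_{(i,j)∈T} (xᵢ/x_j;q)_{aᵢ}(q x_j/xᵢ;q)_{a_j−1} equals 0. -/

import Mathlib

noncomputable section
open Finset

/-- The field ℚ(q) of rational functions in `q`. -/
abbrev K : Type := RatFunc ℚ

/-- The variable `q`. -/
abbrev qq : K := RatFunc.X

/-- Laurent polynomials in `x₁, …, xₙ` over ℚ(q). -/
abbrev ML (n : ℕ) := AddMonoidAlgebra K (Fin n →₀ ℤ)

/-- The constant term of a Laurent polynomial. -/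
def CT {n : ℕ} (f : ML n) : K := f.coeff 0

/-- The exponent vector of `xᵢ`. -/
def e {n : ℕ} (i : Fin n) : Fin n →₀ ℤ := Finsupp.single i 1

/-- The q-shifted factorial `(c·x^v ; q)_k` as a Laurent polynomial. -/
def poch {n : ℕ} (v : Fin n →₀ ℤ) (c : K) (k : ℕ) : ML n :=
  ∏ t ∈ Finset.range k, (1 - AddMonoidAlgebra.single v (c * qq ^ t))

/-- `(q;q)_k`. -/
def qf (k : ℕ) : K := ∏ i ∈ Finset.range k, (1 - qq ^ (i + 1))

/-- The Gaussian binomial coefficient `[N choose m]_q`. -/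
def qbin (N m : ℕ) : K := if m ≤ N then qf N / (qf m * qf (N - m)) else 0

/-- The q-multinomial coefficient `[|a| choose a]_q`. -/
def qmul {n : ℕ} (a : Fin n → ℕ) : K := qf (∑ i, a i) / ∏ i, qf (a i)

/-- The q-shifted factorial `(c;q)_m` in ℚ(q). -/
def qpochK (c : K) (m : ℕ) : K := ∏ i ∈ Finset.range m, (1 - c * qq ^ i)

/-- The partial sum `σᵢ = a₁ + ⋯ + aᵢ`. -/
def sig {n : ℕ} (a : Fin n → ℕ) (i : Fin n) : ℕ := ∑ j ∈ Finset.univ.filter (· ≤ i), a j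

/-- The set of pairs `(i,j)` with `i < j`. -/
def pairs (n : ℕ) : Finset (Fin n × Fin n) := Finset.univ.filter (fun p => p.1 < p.2)

/-- `R(w) = {(w(j),w(i)) : i < j, w(i) > w(j)}`, the inversion set of `w⁻¹`. -/
def Rset {n : ℕ} (w : Equiv.Perm (Fin n)) : Finset (Fin n × Fin n) :=
  (pairs n).filter (fun p => w.symm p.2 < w.symm p.1)

/-- The q-Dyson kernel `∏_{i<j} (xᵢ/xⱼ;q)_{aᵢ} (q xⱼ/xᵢ;q)_{aⱼ}`. -/
def kadellKer {n : ℕ} (a : Fin n → ℕ) : ML n :=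
  ∏ p ∈ pairs n, poch (e p.1 - e p.2) 1 (a p.1) * poch (e p.2 - e p.1) qq (a p.2)

/-- `x^{-v}` for a composition `v`. -/
def negv {n : ℕ} (v : Fin n → ℕ) : Fin n →₀ ℤ :=
  Finsupp.equivFunOnFinite.symm (fun i => -(v i : ℤ))

/-- The complete homogeneous symmetric function `h_m` of a finite family of
ring elements. -/
def hfun {R : Type*} [CommRing R] {ι : Type*} [Fintype ι] [DecidableEq ι]
    (y : ι → R) (m : ℕ) : R := ∑ s : Sym ι m, (s.1.map y).prod

/-- `h_k` extended by zero to integer indices. -/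
def hz {R : Type*} [CommRing R] {ι : Type*} [Fintype ι] [DecidableEq ι]
    (y : ι → R) (k : ℤ) : R := if 0 ≤ k then hfun y k.toNat else 0

/-- The Schur function `s_λ` of a finite family of ring elements, defined by the
Jacobi–Trudi determinant `det(h_{λᵢ−i+j})`. -/
def schur {R : Type*} [CommRing R] {ι : Type*} [Fintype ι] [DecidableEq ι]
    (y : ι → R) {L : ℕ} (lam : Fin L → ℕ) : R :=
  Matrix.det (Matrix.of fun i j : Fin L => hz y ((lam i : ℤ) - (i : ℤ) + (j : ℤ)))

/-- The alphabet `x^{(a)} = (x₁, x₁q, …, x₁q^{a₁−1}, …, xₙ, …, xₙq^{aₙ−1})`. -/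
def alphabet {n : ℕ} (a : Fin n → ℕ) : (Σ i : Fin n, Fin (a i)) → ML n :=
  fun p => AddMonoidAlgebra.single (e p.1) (qq ^ (p.2 : ℕ))

/-!
Write `D` for the pole orders of the kernel: `Dᵢ = Σ_{j → i} aⱼ + Σ_{i → j} (aⱼ - 1)`.
Lagrange interpolation in each variable expresses the constant term of a Laurent polynomial
whose monomials have degree `0` and `xᵢ`-exponent `≥ -Dᵢ` as a weighted sum of its values on
any grid `∏ Bᵢ` with `|Bᵢ| = Dᵢ + 1` (the coefficient form of the Combinatorial
Nullstellensatz), so it suffices to find such a grid on which the kernel vanishes.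

At `xᵢ = q^{-uᵢ}` the factors of the edge `i → j` vanish unless the intervals
`(uᵢ - aᵢ, uᵢ]` and `(uⱼ - aⱼ, uⱼ]` are disjoint. If `aᵢ ≤ uᵢ ≤ |a|` and no factor vanishes,
these intervals tile `(0, |a|]`, so `uᵢ = aᵢ + Σ_{uⱼ < uᵢ} aⱼ` is determined by the set of
vertices preceding `i`. Because `T` is not transitive, repeatedly deleting a sink ends at a
subtournament with all out-degrees positive, and this yields families `Sᵢ` with
`|Sᵢ| ≤ outdeg i` such that in every ordering some vertex has its set of predecessors in
`Sᵢ`. Deleting the at most `outdeg i` corresponding values from `[aᵢ, |a|]`, which has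
`Dᵢ + outdeg i + 1` elements, leaves room for `Bᵢ`, and the kernel vanishes on the whole grid.
-/

section PoleBound

open scoped Classical

variable {σ : Type*} [Fintype σ]

def PoleBound {R : Type*} [Semiring R] (f : AddMonoidAlgebra R (σ →₀ ℤ)) (D : σ → ℕ) : Prop :=
  ∀ m ∈ f.coeff.support, ∑ i, m i = 0 ∧ ∀ i, -(D i : ℤ) ≤ m i

variable {R : Type*} [CommRing R]

theorem poleBound_one_sub_single {v : σ →₀ ℤ} {D : σ → ℕ} (hv : ∑ i, v i = 0)
    (hD : ∀ i, -(D i : ℤ) ≤ v i) (c : R) :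
    PoleBound (1 - AddMonoidAlgebra.single v c) D := by
  intro m hm
  rw [AddMonoidAlgebra.one_def] at hm
  rcases Finset.mem_union.mp (Finsupp.support_sub hm) with hm | hm <;>
    obtain rfl := Finset.mem_singleton.mp (Finsupp.support_single_subset hm)
  · simp
  · exact ⟨hv, hD⟩

theorem PoleBound.mul {f g : AddMonoidAlgebra R (σ →₀ ℤ)} {D E : σ → ℕ} (hf : PoleBound f D)
    (hg : PoleBound g E) : PoleBound (f * g) (D + E) := by
  intro m hm
  obtain ⟨mf, hmf, mg, hmg, rfl⟩ :=
    Finset.mem_add.mp (AddMonoidAlgebra.support_coeff_mul_subset f g hm)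
  obtain ⟨hf₀, hf₁⟩ := hf mf hmf
  obtain ⟨hg₀, hg₁⟩ := hg mg hmg
  refine ⟨by simp [Finset.sum_add_distrib, hf₀, hg₀], fun i => ?_⟩
  have := hf₁ i
  have := hg₁ i
  simp only [Finsupp.coe_add, Pi.add_apply, Nat.cast_add]
  omega

theorem PoleBound.prod {ι : Type*} {s : Finset ι} {f : ι → AddMonoidAlgebra R (σ →₀ ℤ)}
    {D : ι → σ → ℕ} (h : ∀ t ∈ s, PoleBound (f t) (D t)) :
    PoleBound (∏ t ∈ s, f t) (∑ t ∈ s, D t) := by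
  induction s using Finset.cons_induction with
  | empty =>
    intro m hm
    rw [Finset.prod_empty, AddMonoidAlgebra.one_def] at hm
    obtain rfl := Finset.mem_singleton.mp (Finsupp.support_single_subset hm)
    simp
  | cons t s hts ih =>
    rw [Finset.prod_cons, Finset.sum_cons]
    exact (h t (Finset.mem_cons_self t s)).mul
      (ih fun t' ht' => h t' (Finset.mem_cons_of_mem ht'))

end PoleBound

section GridCoefficient

variable {F : Type*} [Field F]

open scoped Classical

open Polynomial in
theorem sum_pow_div_prod_sub_units (B : Finset Fˣ) {k : ℕ} (hk : k < B.card) :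
    ∑ x ∈ B, (x : F) ^ k / ∏ y ∈ B.erase x, ((x : F) - y) = if k = B.card - 1 then 1 else 0 := by
  have hinj : Set.InjOn ((↑) : Fˣ → F) B := Units.val_injective.injOn
  have hdeg : ((X : F[X]) ^ k).degree < B.card := by rw [degree_X_pow]; exact_mod_cast hk
  have h := Lagrange.coeff_eq_sum hinj hdeg
  simp only [coeff_X_pow, eval_pow, eval_X] at h
  rw [← h]
  exact if_congr eq_comm rfl rfl

theorem sum_zpow_div_prod_sub_units (B : Finset Fˣ) {D : ℕ} (hB : B.card = D + 1) {t : ℤ}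
    (ht₀ : -(D : ℤ) ≤ t) (ht : t ≤ 0) :
    ∑ x ∈ B, (x : F) ^ D / (∏ y ∈ B.erase x, ((x : F) - y)) * (x : F) ^ t =
      if t = 0 then 1 else 0 := by
  have hpow (x : Fˣ) : (x : F) ^ D * (x : F) ^ t = (x : F) ^ (D + t).toNat := by
    rw [← zpow_natCast, ← zpow_add₀ x.ne_zero, ← zpow_natCast, Int.toNat_of_nonneg (by omega)]
  simp only [div_mul_eq_mul_div, hpow]
  rw [sum_pow_div_prod_sub_units B (by omega), hB]
  exact if_congr (by omega) rfl rfl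

variable {σ : Type*} [Fintype σ]

def gridWeight (B : σ → Finset Fˣ) (D : σ → ℕ) (z : σ → Fˣ) : F :=
  ∏ i, (z i : F) ^ D i / ∏ y ∈ (B i).erase (z i), ((z i : F) - y)

theorem sum_gridWeight_mul_monomial {B : σ → Finset Fˣ} {D : σ → ℕ}
    (hB : ∀ i, (B i).card = D i + 1) {m : σ →₀ ℤ} (hm₀ : ∑ i, m i = 0)
    (hm : ∀ i, -(D i : ℤ) ≤ m i) :
    ∑ z ∈ Fintype.piFinset B, gridWeight B D z * ∏ i, (z i : F) ^ m i =
      if m = 0 then 1 else 0 := by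
  simp only [gridWeight, ← Finset.prod_mul_distrib]
  rw [← Finset.prod_univ_sum (t := B) (f := fun i x =>
    (x : F) ^ D i / (∏ y ∈ (B i).erase x, ((x : F) - y)) * (x : F) ^ m i)]
  split_ifs with h
  · subst h
    refine Finset.prod_eq_one fun i _ => ?_
    simpa using sum_zpow_div_prod_sub_units (B i) (hB i) (hm i) le_rfl
  · -- a nonzero exponent vector of total degree zero has a negative entry
    obtain ⟨j, hj⟩ : ∃ j, m j < 0 := by
      by_contra! hnonneg
      exact h (Finsupp.ext fun i =>
        (Finset.sum_eq_zero_iff_of_nonneg fun i _ => hnonneg i).mp hm₀ i (Finset.mem_univ i))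
    refine Finset.prod_eq_zero (Finset.mem_univ j) ?_
    rw [sum_zpow_div_prod_sub_units _ (hB j) (hm j) hj.le, if_neg hj.ne]

def monomialChar (z : σ → Fˣ) : Multiplicative (σ →₀ ℤ) →* Fˣ where
  toFun m := ∏ i, z i ^ m.toAdd i
  map_one' := by simp
  map_mul' m m' := by simp [zpow_add, Finset.prod_mul_distrib]

def laurentEval (z : σ → Fˣ) : AddMonoidAlgebra F (σ →₀ ℤ) →ₐ[F] F :=
  AddMonoidAlgebra.lift F F (σ →₀ ℤ) ((Units.coeHom F).comp (monomialChar z))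

theorem laurentEval_single (z : σ → Fˣ) (m : σ →₀ ℤ) (b : F) :
    laurentEval z (AddMonoidAlgebra.single m b) = b * ∏ i, (z i : F) ^ m i := by
  simp [laurentEval, AddMonoidAlgebra.lift_single, monomialChar]

theorem coeff_zero_eq_sum_gridWeight_mul_laurentEval {f : AddMonoidAlgebra F (σ →₀ ℤ)}
    {D : σ → ℕ} (hf : PoleBound f D) {B : σ → Finset Fˣ} (hB : ∀ i, (B i).card = D i + 1) :
    f.coeff 0 = ∑ z ∈ Fintype.piFinset B, gridWeight B D z * laurentEval z f := by
  have hmonomial (m : σ →₀ ℤ) (hm : m ∈ f.coeff.support) :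
      ∑ z ∈ Fintype.piFinset B, gridWeight B D z * laurentEval z (.single m (f.coeff m)) =
        if m = 0 then f.coeff m else 0 := by
    simp only [laurentEval_single, mul_left_comm _ (f.coeff m), ← Finset.mul_sum,
      sum_gridWeight_mul_monomial hB (hf m hm).1 (hf m hm).2, mul_ite, mul_one, mul_zero]
  conv_rhs => rw [← f.sum_coeff_single, Finsupp.sum]
  simp only [map_sum, Finset.mul_sum]
  rw [Finset.sum_comm, Finset.sum_congr rfl hmonomial, Finset.sum_ite_eq']
  split_ifs with h
  · rfl
  · exact Finsupp.notMem_support_iff.mp h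

theorem coeff_zero_eq_zero_of_laurentEval_eq_zero {f : AddMonoidAlgebra F (σ →₀ ℤ)}
    {D : σ → ℕ} (hf : PoleBound f D) {B : σ → Finset Fˣ} (hB : ∀ i, (B i).card = D i + 1)
    (hvanish : ∀ z ∈ Fintype.piFinset B, laurentEval z f = 0) : f.coeff 0 = 0 := by
  rw [coeff_zero_eq_sum_gridWeight_mul_laurentEval hf hB]
  exact Finset.sum_eq_zero fun z hz => by rw [hvanish z hz, mul_zero]

end GridCoefficient

section Tournament

variable {ι : Type*} [DecidableEq ι] (T : Finset (ι × ι))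

def outdegOn (V : Finset ι) (i : ι) : ℕ := #{j ∈ V | (i, j) ∈ T}

def HasNontransitiveTriple (V : Finset ι) : Prop :=
  ∃ i ∈ V, ∃ j ∈ V, ∃ k ∈ V, (i, j) ∈ T ∧ (j, k) ∈ T ∧ (i, k) ∉ T

theorem outdegOn_eq_outdegOn_erase_add_one {V : Finset ι} {i v : ι} (hv : v ∈ V)
    (hiv : (i, v) ∈ T) : outdegOn T V i = outdegOn T (V.erase v) i + 1 := by
  rw [outdegOn, outdegOn, ← Finset.insert_erase hv, Finset.filter_insert, if_pos hiv,
    Finset.card_insert_of_notMem (by simp), Finset.erase_insert (Finset.notMem_erase v V)]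

variable {T}

theorem HasNontransitiveTriple.erase_of_sink {V : Finset ι} (hV : HasNontransitiveTriple T V)
    {v : ι} (hout : ∀ j ∈ V, (v, j) ∉ T) (hin : ∀ i ∈ V, i ≠ v → (i, v) ∈ T) :
    HasNontransitiveTriple T (V.erase v) := by
  obtain ⟨i, hi, j, hj, k, hk, hij, hjk, hik⟩ := hV
  have hiv : i ≠ v := by rintro rfl; exact hout j hj hij
  have hjv : j ≠ v := by rintro rfl; exact hout k hk hjk
  have hkv : k ≠ v := by rintro rfl; exact hik (hin i hi hiv)
  exact ⟨i, Finset.mem_erase.mpr ⟨hiv, hi⟩, j, Finset.mem_erase.mpr ⟨hjv, hj⟩,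
    k, Finset.mem_erase.mpr ⟨hkv, hk⟩, hij, hjk, hik⟩

theorem exists_predecessor_families {α : Type*} [LinearOrder α]
    (htour : ∀ i j, i ≠ j → ((i, j) ∈ T ↔ (j, i) ∉ T)) {V : Finset ι}
    (hV : HasNontransitiveTriple T V) :
    ∃ S : ι → Finset (Finset ι), (∀ i ∈ V, #(S i) ≤ outdegOn T V i) ∧
      ∀ u : ι → α, Set.InjOn u V → ∃ i ∈ V, {j ∈ V | u j < u i} ∈ S i := by
  induction V using Finset.strongInduction with
  | H V ih =>
  by_cases hpos : ∀ i ∈ V, 0 < outdegOn T V i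
  · -- the first vertex of any order has no predecessors
    obtain ⟨i₀, hi₀, -⟩ := hV
    refine ⟨fun _ => {∅}, fun i hi => (Finset.card_singleton _).trans_le (hpos i hi),
      fun u _ => ?_⟩
    obtain ⟨b, hb, hmin⟩ := V.exists_min_image u ⟨i₀, hi₀⟩
    exact ⟨b, hb, by simpa [Finset.filter_eq_empty_iff] using hmin⟩
  -- otherwise delete a sink `v`: each `i ≠ v` beats `v`, which pays for adding `∅` to `S i`,
  -- needed when `i` rather than `v` comes first
  obtain ⟨v, hv, hsink⟩ : ∃ v ∈ V, outdegOn T V v = 0 := by simpa using hpos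
  have hout : ∀ j ∈ V, (v, j) ∉ T := by
    simpa [outdegOn, Finset.filter_eq_empty_iff] using hsink
  have hin : ∀ i ∈ V, i ≠ v → (i, v) ∈ T := fun i hi hiv => (htour i v hiv).mpr (hout i hi)
  obtain ⟨S, hS_card, hS_cover⟩ :=
    ih (V.erase v) (Finset.erase_ssubset hv) (hV.erase_of_sink hout hin)
  refine ⟨fun i => if i = v then ∅ else insert ∅ ((S i).image (insert v)), fun i hi => ?_,
    fun u hu => ?_⟩
  · by_cases hiv : i = v
    · simp [hiv]
    dsimp only
    rw [if_neg hiv, outdegOn_eq_outdegOn_erase_add_one T hv (hin i hi hiv)]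
    calc #(insert ∅ ((S i).image (insert v))) ≤ #(S i) + 1 :=
          (Finset.card_insert_le _ _).trans (Nat.add_le_add_right Finset.card_image_le 1)
      _ ≤ outdegOn T (V.erase v) i + 1 :=
          Nat.add_le_add_right (hS_card i (Finset.mem_erase.mpr ⟨hiv, hi⟩)) 1
  · obtain ⟨b, hb, hmin⟩ := V.exists_min_image u ⟨v, hv⟩
    by_cases hbv : b = v
    · subst hbv
      obtain ⟨i, hi, hSi⟩ := hS_cover u (hu.mono (Finset.coe_subset.mpr (V.erase_subset b)))
      obtain ⟨hib, hiV⟩ := Finset.mem_erase.mp hi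
      have hlt : u b < u i := (hmin i hiV).lt_of_ne fun h => hib (hu hiV hb h.symm)
      refine ⟨i, hiV, ?_⟩
      dsimp only
      rw [if_neg hib, ← Finset.insert_erase hb, Finset.filter_insert, if_pos hlt]
      exact Finset.mem_insert_of_mem (Finset.mem_image_of_mem _ hSi)
    · refine ⟨b, hb, ?_⟩
      dsimp only
      rw [if_neg hbv, Finset.filter_eq_empty_iff.mpr fun j hj => (hmin j hj).not_gt]
      exact Finset.mem_insert_self _ _

def edgePoles (a : ι → ℕ) (p : ι × ι) : ι → ℕ :=
  Pi.single p.2 (a p.1) + Pi.single p.1 (a p.2 - 1)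

theorem sum_edgePoles_add_outdegOn_add [Fintype ι] (hirr : ∀ i, (i, i) ∉ T)
    (htour : ∀ i j, i ≠ j → ((i, j) ∈ T ↔ (j, i) ∉ T)) {a : ι → ℕ} (ha : ∀ i, 0 < a i) (i : ι) :
    (∑ p ∈ T, edgePoles a p) i + outdegOn T Finset.univ i + a i = ∑ j, a j := by
  have hpoles : (∑ p ∈ T, edgePoles a p) i =
      ∑ j ∈ {j | (j, i) ∈ T}, a j + ∑ j ∈ {j | (i, j) ∈ T}, (a j - 1) := by
    simp only [edgePoles, Finset.sum_apply, Pi.add_apply, Pi.single_apply,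
      Finset.sum_add_distrib, ← Finset.sum_filter]
    congr 1
    · exact Finset.sum_nbij' Prod.fst (fun j => (j, i)) (by grind) (by grind) (by grind)
        (by grind) (by grind)
    · exact Finset.sum_nbij' Prod.snd (fun j => (i, j)) (by grind) (by grind) (by grind)
        (by grind) (by grind)
  rw [hpoles, outdegOn, Finset.card_filter, Finset.sum_filter, Finset.sum_filter,
    ← Fintype.sum_ite_eq' i a]
  simp only [← Finset.sum_add_distrib]
  refine Finset.sum_congr rfl fun j _ => ?_
  by_cases hji : j = i
  · subst hji; simp [hirr]
  · have := ha j
    by_cases h : (i, j) ∈ T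
    · simp [h, (htour i j (Ne.symm hji)).mp h, hji]; omega
    · simp [h, (htour j i hji).mpr h, hji]

end Tournament

section Tiling

variable {ι : Type*} {A u : ι → ℤ}

theorem sum_le_sub_of_pairwise_separated (hA : ∀ i, 0 ≤ A i)
    (hsep : Pairwise fun i j => A i ≤ u i - u j ∨ A j ≤ u j - u i) {s : Finset ι} {lo hi : ℤ}
    (hlohi : lo ≤ hi) (hs : ∀ k ∈ s, lo ≤ u k - A k ∧ u k ≤ hi) :
    ∑ k ∈ s, A k ≤ hi - lo := by
  classical
  have hdisj : (s : Set ι).PairwiseDisjoint fun k => Finset.Ioc (u k - A k) (u k) :=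
    fun x _ y _ hxy => Finset.disjoint_left.mpr fun z hzx hzy => by
      simp only [Finset.mem_Ioc] at hzx hzy
      rcases hsep hxy with h | h <;> omega
  have hsub : s.biUnion (fun k => Finset.Ioc (u k - A k) (u k)) ⊆ Finset.Ioc lo hi := by
    intro z hz
    obtain ⟨k, hk, hzk⟩ := Finset.mem_biUnion.mp hz
    have := hs k hk
    simp only [Finset.mem_Ioc] at hzk ⊢
    omega
  have hlen {x y : ℤ} (h : x ≤ y) : ((Finset.Ioc x y).card : ℤ) = y - x := by
    rw [Int.card_Ioc, Int.toNat_of_nonneg (by omega)]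
  calc ∑ k ∈ s, A k = ∑ k ∈ s, ((Finset.Ioc (u k - A k) (u k)).card : ℤ) :=
        Finset.sum_congr rfl fun k _ => by rw [hlen (by linarith [hA k])]; ring
    _ = (s.biUnion fun k => Finset.Ioc (u k - A k) (u k)).card := by
        rw [Finset.card_biUnion hdisj]; push_cast; rfl
    _ ≤ (Finset.Ioc lo hi).card := by exact_mod_cast Finset.card_le_card hsub
    _ = hi - lo := hlen hlohi

theorem eq_add_sum_lt_of_pairwise_separated [Fintype ι] (hA : ∀ i, 0 < A i)
    (hsep : Pairwise fun i j => A i ≤ u i - u j ∨ A j ≤ u j - u i) (hlo : ∀ i, A i ≤ u i)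
    (hhi : ∀ i, u i ≤ ∑ j, A j) (i : ι) :
    u i = A i + ∑ j ∈ {j | u j < u i}, A j := by
  classical
  have hle : (Finset.univ.filter fun j => u j ≤ u i) =
      insert i (Finset.univ.filter fun j => u j < u i) := by
    ext j
    simp only [Finset.mem_filter, Finset.mem_univ, true_and, Finset.mem_insert]
    rcases eq_or_ne j i with rfl | hji
    · simp
    · have := hA i; have := hA j
      have hne : u j ≠ u i := by rcases hsep hji with h | h <;> omega
      simp only [hji, false_or]
      exact ⟨fun h' => lt_of_le_of_ne h' hne, le_of_lt⟩
  have hlow : ∑ j ∈ {j | u j ≤ u i}, A j ≤ u i - 0 :=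
    sum_le_sub_of_pairwise_separated (fun j => (hA j).le) hsep (by linarith [hA i, hlo i])
      fun k hk => ⟨by linarith [hlo k], (Finset.mem_filter.mp hk).2⟩
  have hhigh : ∑ j ∈ {j | ¬u j ≤ u i}, A j ≤ ∑ j, A j - u i :=
    sum_le_sub_of_pairwise_separated (fun j => (hA j).le) hsep (hhi i) fun k hk => by
      have hik : u i < u k := not_le.mp (Finset.mem_filter.mp hk).2
      have := hA i
      rcases hsep (show i ≠ k by rintro rfl; exact lt_irrefl _ hik) with h | h
      · omega
      · exact ⟨by omega, hhi k⟩
  rw [hle, Finset.sum_insert (by simp)] at hlow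
  have htot := Finset.sum_filter_add_sum_filter_not Finset.univ (fun j => u j ≤ u i) A
  rw [hle, Finset.sum_insert (by simp)] at htot
  omega

end Tiling

section QGrid

open scoped Classical

theorem qq_ne_zero : qq ≠ 0 := RatFunc.X_ne_zero

theorem qq_pow_ne_one {k : ℕ} (hk : k ≠ 0) : qq ^ k ≠ 1 := by
  intro h
  have hdeg := congrArg RatFunc.intDegree h
  rw [RatFunc.intDegree_one, qq, ← RatFunc.algebraMap_X, ← map_pow, RatFunc.intDegree_polynomial,
    Polynomial.natDegree_X_pow] at hdeg
  omega

def qUnit : Kˣ := Units.mk0 qq qq_ne_zero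

theorem qUnit_zpow_injective : Function.Injective fun k : ℤ => qUnit ^ k := by
  refine injective_zpow_iff_not_isOfFinOrder.mpr fun hfin => ?_
  obtain ⟨k, hk, hpow⟩ := isOfFinOrder_iff_pow_eq_one.mp hfin
  exact qq_pow_ne_one hk.ne' (by simpa [qUnit] using congrArg Units.val hpow)

variable {n : ℕ}

theorem laurentEval_single_sub (z : Fin n → Kˣ) (i j : Fin n) (c : K) :
    laurentEval z (AddMonoidAlgebra.single (e i - e j) c) = c * z i / z j := by
  simp [laurentEval_single, e, Finsupp.single_apply, zpow_sub₀, Finset.prod_div_distrib,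
    mul_div_assoc]

def qPoint {σ : Type*} (u : σ → ℤ) : σ → Kˣ := fun i => qUnit ^ (-u i)

theorem laurentEval_poch_qPoint_eq_zero (u : Fin n → ℤ) (i j : Fin n) (s k : ℕ)
    (h₀ : (s : ℤ) ≤ u i - u j) (h₁ : u i - u j < s + k) :
    laurentEval (qPoint u) (poch (e i - e j) (qq ^ s) k) = 0 := by
  rw [poch, map_prod]
  refine Finset.prod_eq_zero (i := (u i - u j - s).toNat) (by simp; omega) ?_
  rw [map_sub, map_one, laurentEval_single_sub, sub_eq_zero]
  simp only [qPoint, qUnit, Units.val_zpow_eq_zpow_val, Units.val_mk0]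
  rw [← zpow_natCast, ← zpow_natCast, ← zpow_add₀ qq_ne_zero, ← zpow_add₀ qq_ne_zero,
    ← zpow_sub₀ qq_ne_zero, show (s : ℤ) + (u i - u j - s).toNat + -u i - -u j = 0 by omega,
    zpow_zero]

theorem poleBound_poch (i j : Fin n) (c : K) (k : ℕ) :
    PoleBound (poch (e i - e j) c k) (Pi.single j k) := by
  have hfactor (t : ℕ) : PoleBound (1 - AddMonoidAlgebra.single (e i - e j) (c * qq ^ t))
      (Pi.single j 1) := by
    refine poleBound_one_sub_single ?_ (fun l => ?_) _
    · simp [e, Finsupp.single_apply]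
    · by_cases hl : l = j <;> by_cases hi : l = i <;> simp_all [e, Finsupp.single_apply, eq_comm]
  have hpoles : ∑ _t ∈ Finset.range k, (Pi.single j 1 : Fin n → ℕ) = Pi.single j k := by
    ext l
    simp [Pi.single_apply]
  rw [poch, ← hpoles]
  exact PoleBound.prod fun t _ => hfactor t

variable (a : Fin n → ℕ)

def edgeFactor (p : Fin n × Fin n) : ML n :=
  poch (e p.1 - e p.2) 1 (a p.1) * poch (e p.2 - e p.1) qq (a p.2 - 1)

theorem poleBound_edgeFactor (p : Fin n × Fin n) : PoleBound (edgeFactor a p) (edgePoles a p) :=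
  (poleBound_poch _ _ _ _).mul (poleBound_poch _ _ _ _)

theorem laurentEval_edgeFactor_eq_zero {u : Fin n → ℤ} {i j : Fin n}
    (h₁ : -(a j : ℤ) < u i - u j) (h₂ : u i - u j < a i) :
    laurentEval (qPoint u) (edgeFactor a (i, j)) = 0 := by
  rw [edgeFactor, map_mul]
  dsimp only
  rcases le_or_gt 0 (u i - u j) with h | h
  · rw [← pow_zero qq,
      laurentEval_poch_qPoint_eq_zero u i j 0 _ (by simpa using h) (by simpa using h₂), zero_mul]
  · rw [← pow_one qq, laurentEval_poch_qPoint_eq_zero u j i 1 _ (by simp; omega) (by omega),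
      mul_zero]

theorem CT_eq_zero_of_laurentEval_qPoint_eq_zero {f : ML n} {D : Fin n → ℕ} (hf : PoleBound f D)
    {B : Fin n → Finset ℤ} (hB : ∀ i, (B i).card = D i + 1)
    (hvanish : ∀ u ∈ Fintype.piFinset B, laurentEval (qPoint u) f = 0) : CT f = 0 := by
  have hinj : Function.Injective fun k : ℤ => qUnit ^ (-k) :=
    qUnit_zpow_injective.comp neg_injective
  refine coeff_zero_eq_zero_of_laurentEval_eq_zero hf
    (B := fun i => (B i).image fun k => qUnit ^ (-k))
    (fun i => by rw [Finset.card_image_of_injective _ hinj, hB]) fun z hz => ?_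
  simp only [Fintype.mem_piFinset, Finset.mem_image] at hz
  choose u hu hzu using hz
  have hz : z = qPoint u := funext fun i => (hzu i).symm
  exact hz ▸ hvanish u (Fintype.mem_piFinset.mpr hu)

end QGrid

section Kernel

variable {n : ℕ} {a : Fin n → ℕ} {T : Finset (Fin n × Fin n)}

/-- The value `uᵢ` is forced to take, in a tiling of `(0, |a|]` by the intervals
`(uⱼ - aⱼ, uⱼ]`, when the vertices preceding `i` form a member of `S i`. -/
def forbiddenValues (a : Fin n → ℕ) (S : Fin n → Finset (Finset (Fin n))) (i : Fin n) :
    Finset ℤ :=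
  (S i).image fun s => (a i : ℤ) + ∑ j ∈ s, (a j : ℤ)

theorem exists_grid_avoiding_forbiddenValues (hirr : ∀ i, (i, i) ∉ T)
    (htour : ∀ i j, i ≠ j → ((i, j) ∈ T ↔ (j, i) ∉ T)) (ha : ∀ i, 0 < a i)
    {S : Fin n → Finset (Finset (Fin n))}
    (hS : ∀ i ∈ Finset.univ, #(S i) ≤ outdegOn T Finset.univ i) (i : Fin n) :
    ∃ B : Finset ℤ, B ⊆ Finset.Icc (a i : ℤ) (∑ j, (a j : ℤ)) \ forbiddenValues a S i ∧
      #B = (∑ p ∈ T, edgePoles a p) i + 1 := by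
  refine Finset.exists_subset_card_eq ?_
  have hsize : ((∑ p ∈ T, edgePoles a p) i : ℤ) + outdegOn T Finset.univ i + a i =
      ∑ j, (a j : ℤ) := by
    exact_mod_cast sum_edgePoles_add_outdegOn_add hirr htour ha i
  have hforb : #(forbiddenValues a S i) ≤ outdegOn T Finset.univ i :=
    Finset.card_image_le.trans (hS i (Finset.mem_univ i))
  have hsdiff := Finset.card_le_card_sdiff_add_card
    (s := Finset.Icc (a i : ℤ) (∑ j, (a j : ℤ))) (t := forbiddenValues a S i)
  rw [Int.card_Icc] at hsdiff
  omega

theorem laurentEval_prod_edgeFactor_eq_zero (ha : ∀ i, 0 < a i)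
    (htour : ∀ i j, i ≠ j → ((i, j) ∈ T ↔ (j, i) ∉ T)) {S : Fin n → Finset (Finset (Fin n))}
    (hS : ∀ u : Fin n → ℤ, Set.InjOn u ↑(Finset.univ : Finset (Fin n)) →
      ∃ i ∈ (Finset.univ : Finset (Fin n)), Finset.univ.filter (fun j => u j < u i) ∈ S i)
    {u : Fin n → ℤ} (hlo : ∀ i, (a i : ℤ) ≤ u i) (hhi : ∀ i, u i ≤ ∑ j, (a j : ℤ))
    (hforb : ∀ i, u i ∉ forbiddenValues a S i) :
    laurentEval (qPoint u) (∏ p ∈ T, edgeFactor a p) = 0 := by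
  rw [map_prod]
  by_cases hsep : Pairwise fun i j => (a i : ℤ) ≤ u i - u j ∨ (a j : ℤ) ≤ u j - u i
  · have hinj : Set.InjOn u ↑(Finset.univ : Finset (Fin n)) := fun i _ j _ hij => by
      by_contra hne
      have := ha i; have := ha j
      rcases hsep hne with h | h <;> omega
    obtain ⟨i, -, hi⟩ := hS u hinj
    refine absurd (Finset.mem_image.mpr ⟨_, hi, ?_⟩) (hforb i)
    exact (eq_add_sum_lt_of_pairwise_separated (fun j => by exact_mod_cast ha j) hsep hlo hhi
      i).symm
  · simp only [Pairwise, not_forall, not_or, not_le] at hsep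
    obtain ⟨i, j, hij, hi, hj⟩ := hsep
    by_cases hijT : (i, j) ∈ T
    · exact Finset.prod_eq_zero hijT (laurentEval_edgeFactor_eq_zero a (by omega) hi)
    · exact Finset.prod_eq_zero ((htour j i hij.symm).mpr hijT)
        (laurentEval_edgeFactor_eq_zero a (by omega) hj)

end Kernel

/-- Tournament form, nontransitive case (Bressoud–Goulden's Master Theorem). -/
theorem tournamentNontransitive (n : ℕ) (a : Fin n → ℕ) (ha : ∀ i, 0 < a i)
    (T : Finset (Fin n × Fin n))
    (hirr : ∀ i : Fin n, (i, i) ∉ T)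
    (htour : ∀ i j : Fin n, i ≠ j → ((i, j) ∈ T ↔ (j, i) ∉ T))
    (hnontrans : ¬ ∀ i j k : Fin n, (i, j) ∈ T → (j, k) ∈ T → (i, k) ∈ T) :
    CT (∏ p ∈ T, poch (e p.1 - e p.2) 1 (a p.1) * poch (e p.2 - e p.1) qq (a p.2 - 1))
      = 0 := by
  obtain ⟨S, hS_card, hS_cover⟩ := exists_predecessor_families (α := ℤ) htour
    (V := Finset.univ) (by simpa [HasNontransitiveTriple] using hnontrans)
  choose B hB_sub hB_card using exists_grid_avoiding_forbiddenValues hirr htour ha hS_card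
  refine CT_eq_zero_of_laurentEval_qPoint_eq_zero
    (PoleBound.prod fun p _ => poleBound_edgeFactor a p) hB_card fun u hu => ?_
  have hu i := Finset.mem_sdiff.mp (hB_sub i (Fintype.mem_piFinset.mp hu i))
  exact laurentEval_prod_edgeFactor_eq_zero ha htour hS_cover
    (fun i => (Finset.mem_Icc.mp (hu i).1).1) (fun i => (Finset.mem_Icc.mp (hu i).1).2)
    fun i => (hu i).2
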